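/- For every x₀ ∈ Δ, every open set U ⊆ Δ with x₀ ∈ U, and every ε > 0, there exists a continuous function h : X → [0,1] whose support is a compact subset of U, such that h ≡ 1 on an open neighbourhood of x₀ and ρ(x₀) ≤ sup_{y∈X} Σ_{x∈φ⁻¹(y)} ρ(x)h(x) < ρ(x₀) + ε. -/

import Mathlib

/-!
Choose a finite part `s` of the fibre over `φ x₀` carrying all of its `ρ`-mass up to `ε / 2`,
and a bump function `a` near `x₀` vanishing at the other points of `s`; then `L(a)(φ x₀)` is
below `ρ(x₀) + ε / 2`, and by continuity of `L(a)` (the potential maps `C₀(Δ)` into `C₀(X)`)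
so is `L(a)(y)` for `y` near `φ x₀`. A second bump function `h ≤ a` supported in
`φ⁻¹` of that neighbourhood has `L(h) ≤ L(a)` there and `L(h) = 0` elsewhere, while
`L(h)(φ x₀) ≥ ρ(x₀) h(x₀) = ρ(x₀)`.
-/

open scoped ZeroAtInfty

noncomputable section

variable {X : Type*} [TopologicalSpace X]

/-- The fibre of `φ : Δ → X` over `y`. -/
def Fiber (Δ : Set X) (φ : X → X) (y : X) : Set X := {x | x ∈ Δ ∧ φ x = y}

/-- `ρ : Δ → [0,∞)` is a potential with bound `M`: it is nonnegative on `Δ`, the sums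
`Σ_{x ∈ φ⁻¹(y)} ρ(x)` are (summable and) bounded by `M`, and for every `a ∈ C₀(Δ)` the
function `L(a)(y) = Σ_{x ∈ φ⁻¹(y)} ρ(x) a(x)` belongs to `C₀(X)`. -/
def IsPotential (Δ : Set X) (φ : X → X) (ρ : X → ℝ) (M : ℝ) : Prop :=
  (∀ x ∈ Δ, 0 ≤ ρ x) ∧
  (∀ y : X, Summable fun x : Fiber Δ φ y => ρ x.1) ∧
  (∀ y : X, (∑' x : Fiber Δ φ y, ρ x.1) ≤ M) ∧
  ∀ a : C₀(X, ℂ), (∀ x ∉ Δ, a x = 0) →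
    ∃ b : C₀(X, ℂ), ∀ y : X, b y = ∑' x : Fiber Δ φ y, (ρ x.1 : ℂ) * a x.1

/-- `Δ_pos`: the set of points of `Δ` where `ρ` is strictly positive. -/
def Dpos (Δ : Set X) (ρ : X → ℝ) : Set X := {x | x ∈ Δ ∧ 0 < ρ x}

/-- `Δ_reg`: the set of points of `Δ_pos` where `ρ` (as a function on `Δ`) is continuous. -/
def Dreg (Δ : Set X) (ρ : X → ℝ) : Set X :=
  {x | x ∈ Δ ∧ 0 < ρ x ∧ ContinuousWithinAt ρ Δ x}

open Set Filter

lemma exists_bump_of_mem_isOpen [LocallyCompactSpace X] [R1Space X] {U : Set X} (hU : IsOpen U)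
    {x₀ : X} (hx₀ : x₀ ∈ U) :
    ∃ h : C(X, ℝ), (∀ x, h x ∈ Icc (0 : ℝ) 1) ∧ HasCompactSupport h ∧ tsupport h ⊆ U ∧
      ∃ W : Set X, IsOpen W ∧ x₀ ∈ W ∧ ∀ x ∈ W, h x = 1 := by
  obtain ⟨K, hK, hx₀K, hKU⟩ := exists_compact_subset hU hx₀
  obtain ⟨h, hhK, hhc, hhU, hh01⟩ := exists_continuousMap_one_of_isCompact_subset_isOpen hK hU hKU
  exact ⟨h, hh01, hhc, hhU, interior K, isOpen_interior, hx₀K,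
    fun x hx => hhK (interior_subset hx)⟩

section WeightedSum

variable {ι : Type*} {f g g' : ι → ℝ}

lemma summable_mul_of_mem_Icc (hf0 : ∀ i, 0 ≤ f i) (hf : Summable f)
    (hg : ∀ i, g i ∈ Icc (0 : ℝ) 1) : Summable fun i => f i * g i :=
  hf.of_nonneg_of_le (fun i => mul_nonneg (hf0 i) (hg i).1)
    fun i => mul_le_of_le_one_right (hf0 i) (hg i).2

lemma tsum_mul_le_tsum_mul (hf0 : ∀ i, 0 ≤ f i) (hf : Summable f)
    (hg : ∀ i, g i ∈ Icc (0 : ℝ) 1) (hg' : ∀ i, g' i ∈ Icc (0 : ℝ) 1) (hle : ∀ i, g i ≤ g' i) :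
    ∑' i, f i * g i ≤ ∑' i, f i * g' i :=
  (summable_mul_of_mem_Icc hf0 hf hg).tsum_le_tsum
    (fun i => mul_le_mul_of_nonneg_left (hle i) (hf0 i)) (summable_mul_of_mem_Icc hf0 hf hg')

lemma mul_le_tsum_mul (hf0 : ∀ i, 0 ≤ f i) (hf : Summable f) (hg : ∀ i, g i ∈ Icc (0 : ℝ) 1)
    (i : ι) : f i * g i ≤ ∑' j, f j * g j :=
  (summable_mul_of_mem_Icc hf0 hf hg).le_tsum i fun j _ => mul_nonneg (hf0 j) (hg j).1

lemma exists_finset_tsum_mul_lt (hf0 : ∀ i, 0 ≤ f i) (hf : Summable f) (i₀ : ι) {ε : ℝ}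
    (hε : 0 < ε) :
    ∃ s : Finset ι, ∀ g : ι → ℝ, (∀ i, g i ∈ Icc (0 : ℝ) 1) → (∀ i ∈ s, i ≠ i₀ → g i = 0) →
      ∑' i, f i * g i < f i₀ + ε := by
  obtain ⟨s, hi₀s, htail⟩ : ∃ s : Finset ι, {i₀} ⊆ s ∧ ∑' i : ↑((s : Set ι)ᶜ), f i < ε :=
    ((eventually_ge_atTop {i₀}).and
      ((tendsto_tsum_compl_atTop_zero f).eventually (gt_mem_nhds hε))).exists
  refine ⟨s, fun g hg hgs => ?_⟩
  have hhead : ∑ i ∈ s, f i * g i = f i₀ * g i₀ :=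
    Finset.sum_eq_single_of_mem i₀ (hi₀s (Finset.mem_singleton_self i₀))
      fun i hi hne => by rw [hgs i hi hne, mul_zero]
  have hfs : Summable fun i : ↑((s : Set ι)ᶜ) => f i := hf.subtype _
  have htail' : ∑' i : ↑((s : Set ι)ᶜ), f i * g i ≤ ∑' i : ↑((s : Set ι)ᶜ), f i := by
    simpa using tsum_mul_le_tsum_mul (f := fun i : ↑((s : Set ι)ᶜ) => f i) (g' := 1)
      (fun i => hf0 i) hfs (fun i => hg i) (fun _ => ⟨zero_le_one, le_rfl⟩) fun i => (hg i).2
  rw [← (summable_mul_of_mem_Icc hf0 hf hg).sum_add_tsum_compl (s := s), hhead]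
  linarith [mul_le_of_le_one_right (hf0 i₀) (hg i₀).2]

end WeightedSum

/-- The transfer operator `L` of the potential `ρ`, on real-valued functions. -/
def transfer {α : Type*} (Δ : Set α) (φ : α → α) (ρ : α → ℝ) (g : α → ℝ) (y : α) : ℝ :=
  ∑' x : Fiber Δ φ y, ρ x.1 * g x.1

section Transfer

variable {α : Type*} {Δ : Set α} {φ : α → α} {ρ : α → ℝ} {g g' : α → ℝ}

lemma transfer_mono (hρ : ∀ x ∈ Δ, 0 ≤ ρ x) {y : α}
    (hsum : Summable fun x : Fiber Δ φ y => ρ x.1) (hg : ∀ x, g x ∈ Icc (0 : ℝ) 1)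
    (hg' : ∀ x, g' x ∈ Icc (0 : ℝ) 1) (hle : ∀ x, g x ≤ g' x) :
    transfer Δ φ ρ g y ≤ transfer Δ φ ρ g' y :=
  tsum_mul_le_tsum_mul (fun x => hρ _ x.2.1) hsum (fun _ => hg _) (fun _ => hg' _) fun _ => hle _

lemma mul_le_transfer (hρ : ∀ x ∈ Δ, 0 ≤ ρ x) {x : α} (hx : x ∈ Δ)
    (hsum : Summable fun x' : Fiber Δ φ (φ x) => ρ x'.1) (hg : ∀ x, g x ∈ Icc (0 : ℝ) 1) :
    ρ x * g x ≤ transfer Δ φ ρ g (φ x) :=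
  mul_le_tsum_mul (g := fun x' : Fiber Δ φ (φ x) => g x'.1) (fun x' => hρ _ x'.2.1) hsum
    (fun _ => hg _) ⟨x, hx, rfl⟩

lemma transfer_eq_zero {y : α} (hg : ∀ x ∈ Fiber Δ φ y, g x = 0) : transfer Δ φ ρ g y = 0 := by
  simp [transfer, hg _ (Subtype.prop _)]

lemma transfer_le_of_support (hρ : ∀ x ∈ Δ, 0 ≤ ρ x)
    (hsum : ∀ y, Summable fun x : Fiber Δ φ y => ρ x.1) {a h : α → ℝ}
    (ha : ∀ x, a x ∈ Icc (0 : ℝ) 1) (hh : ∀ x, h x ∈ Icc (0 : ℝ) 1) (hah : ∀ x, h x ≠ 0 → a x = 1)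
    {c : ℝ} (hc : 0 ≤ c) (hsupp : ∀ x, h x ≠ 0 → transfer Δ φ ρ a (φ x) < c) (y : α) :
    transfer Δ φ ρ h y ≤ c := by
  by_cases hy : transfer Δ φ ρ a y < c
  · have hle : ∀ x, h x ≤ a x := fun x => by
      by_cases hx : h x = 0
      · exact hx ▸ (ha x).1
      · exact hah x hx ▸ (hh x).2
    exact (transfer_mono hρ (hsum y) hh ha hle).trans hy.le
  · rw [transfer_eq_zero fun x hx => by_contra fun hx0 => hy (by rw [← hx.2]; exact hsupp x hx0)]
    exact hc

lemma IsPotential.continuous_transfer [TopologicalSpace α] {M : ℝ}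
    (hpot : IsPotential Δ φ ρ M) {a : C(α, ℝ)} (ha : HasCompactSupport a)
    (haΔ : ∀ x ∉ Δ, a x = 0) : Continuous (transfer Δ φ ρ a) := by
  let ac : C₀(α, ℂ) := ⟨⟨fun x => (a x : ℂ), by fun_prop⟩,
    (ha.comp_left Complex.ofReal_zero).is_zero_at_infty⟩
  obtain ⟨b, hb⟩ := hpot.2.2.2 ac fun x hx => by simp [ac, haΔ x hx]
  have hbL : ∀ y, transfer Δ φ ρ a y = (b y).re := fun y => by
    rw [hb y, ← Complex.ofReal_re (transfer Δ φ ρ a y), transfer, Complex.ofReal_tsum]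
    simp [ac]
  exact (Complex.continuous_re.comp (map_continuous b)).congr fun y => (hbL y).symm

end Transfer

theorem approximation_of_rho_general
    {X : Type*} [TopologicalSpace X] [LocallyCompactSpace X] [T2Space X]
    (Δ : Set X) (φ : X → X) (ρ : X → ℝ) (M : ℝ)
    (hΔ : IsOpen Δ) (hφ : ContinuousOn φ Δ)
    (hpot : IsPotential Δ φ ρ M)
    (x₀ : X) (U : Set X) (hU : IsOpen U) (hx₀U : x₀ ∈ U) (hUΔ : U ⊆ Δ)
    (ε : ℝ) (hε : 0 < ε) :
    ∃ h : C(X, ℝ), (∀ x, h x ∈ Set.Icc (0 : ℝ) 1) ∧ HasCompactSupport h ∧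
      tsupport h ⊆ U ∧ (∃ W : Set X, IsOpen W ∧ x₀ ∈ W ∧ ∀ x ∈ W, h x = 1) ∧
      ρ x₀ ≤ (⨆ y : X, ∑' x : Fiber Δ φ y, ρ x.1 * h x.1) ∧
      (⨆ y : X, ∑' x : Fiber Δ φ y, ρ x.1 * h x.1) < ρ x₀ + ε := by
  have hρ := hpot.1
  have hsum := hpot.2.1
  have hx₀Δ : x₀ ∈ Δ := hUΔ hx₀U
  obtain ⟨s, hs⟩ := exists_finset_tsum_mul_lt (fun x : Fiber Δ φ (φ x₀) => hρ _ x.2.1)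
    (hsum _) ⟨x₀, hx₀Δ, rfl⟩ (half_pos hε)
  set S : Set X := Subtype.val '' (s : Set (Fiber Δ φ (φ x₀))) \ {x₀}
  have hUS : IsOpen (U \ S) := hU.sdiff ((s.finite_toSet.image _).subset sdiff_subset).isClosed
  obtain ⟨a, ha01, hac, haU, W₀, hW₀, hx₀W₀, haW₀⟩ :=
    exists_bump_of_mem_isOpen hUS ⟨hx₀U, fun hx₀S => hx₀S.2 rfl⟩
  have ha_cont := hpot.continuous_transfer hac
    fun x hx => image_eq_zero_of_notMem_tsupport fun hxa => hx (hUΔ (haU hxa).1)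
  have ha_x₀ : transfer Δ φ ρ a (φ x₀) < ρ x₀ + ε / 2 := hs _ (fun _ => ha01 _)
    fun x hx hne => image_eq_zero_of_notMem_tsupport fun hxa =>
      (haU hxa).2 ⟨⟨x, hx, rfl⟩, fun hx₀ => hne (Subtype.ext hx₀)⟩
  set V : Set X := (W₀ ∩ U) ∩ (Δ ∩ φ ⁻¹' {y | transfer Δ φ ρ a y < ρ x₀ + ε / 2})
  have hV : IsOpen V :=
    (hW₀.inter hU).inter (hφ.isOpen_inter_preimage hΔ (isOpen_lt ha_cont continuous_const))
  obtain ⟨h, hh01, hhc, hhV, W, hW, hx₀W, hhW⟩ :=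
    exists_bump_of_mem_isOpen hV ⟨⟨hx₀W₀, hx₀U⟩, hx₀Δ, ha_x₀⟩
  have hub : ∀ y, transfer Δ φ ρ h y ≤ ρ x₀ + ε / 2 :=
    transfer_le_of_support hρ hsum ha01 hh01 (fun x hx => haW₀ x (hhV (subset_tsupport _ hx)).1.1)
      (by linarith [hρ x₀ hx₀Δ]) fun x hx => (hhV (subset_tsupport _ hx)).2.2
  have : Nonempty X := ⟨x₀⟩
  refine ⟨h, hh01, hhc, fun x hx => (hhV hx).1.2, ⟨W, hW, hx₀W, hhW⟩, ?_,
    (ciSup_le hub).trans_lt (by linarith)⟩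
  calc ρ x₀ = ρ x₀ * h x₀ := by rw [hhW x₀ hx₀W, mul_one]
    _ ≤ transfer Δ φ ρ h (φ x₀) := mul_le_transfer hρ hx₀Δ (hsum _) hh01
    _ ≤ ⨆ y, transfer Δ φ ρ h y := le_ciSup ⟨_, forall_mem_range.2 hub⟩ _

/-- For every `x₀ ∈ Δ`, every open `U ⊆ Δ` containing `x₀`, and every `ε > 0`
there is a continuous `[0,1]`-valued function `h` compactly supported in `U`, equal to `1` on a
neighbourhood of `x₀`, with `ρ(x₀) ≤ sup_y Σ_{x ∈ φ⁻¹(y)} ρ(x) h(x) < ρ(x₀) + ε`. -/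
theorem approximation_of_rho
    {X : Type*} [TopologicalSpace X] [LocallyCompactSpace X] [T2Space X]
    (Δ : Set X) (φ : X → X) (ρ : X → ℝ) (M : ℝ)
    (hΔ : IsOpen Δ) (hφ : ContinuousOn φ Δ)
    (hcount : ∀ y : X, (Fiber Δ φ y).Countable)
    (hpot : IsPotential Δ φ ρ M)
    (x₀ : X) (U : Set X) (hU : IsOpen U) (hx₀U : x₀ ∈ U) (hUΔ : U ⊆ Δ)
    (ε : ℝ) (hε : 0 < ε) :
    ∃ h : C(X, ℝ), (∀ x, h x ∈ Set.Icc (0 : ℝ) 1) ∧ HasCompactSupport h ∧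
      tsupport h ⊆ U ∧ (∃ W : Set X, IsOpen W ∧ x₀ ∈ W ∧ ∀ x ∈ W, h x = 1) ∧
      ρ x₀ ≤ (⨆ y : X, ∑' x : Fiber Δ φ y, ρ x.1 * h x.1) ∧
      (⨆ y : X, ∑' x : Fiber Δ φ y, ρ x.1 * h x.1) < ρ x₀ + ε :=
  approximation_of_rho_general Δ φ ρ M hΔ hφ hpot x₀ U hU hx₀U hUΔ ε hε
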